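/- Let M be a von Neumann algebra acting on a complex Hilbert space H, let P : M → M be a normal, unital, completely positive linear map, and let (π, K, W) be a minimal Stinespring triple for P. Then the map X ↦ W*X is a bijection from the intertwining space L := {X ∈ B(H,K) : XS = π(S)X for all S ∈ M} onto the Arveson correspondence E_P; more precisely: (i) for every X ∈ L, the operator Y = W*X satisfies the P-boundedness condition with constant C = ‖X‖², and (ii) for every Y ∈ E_P there is a unique X ∈ L with W*X = Y, and this X satisfies X*π(S)Wh = S Y* h for all S ∈ M and h ∈ H. -/

import Mathlib

open scoped ComplexOrder
open ContinuousLinearMap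

noncomputable section

/-- Positivity of an `n × n` operator matrix `(a i j)`, regarded as an operator on the
`n`-fold direct sum `Hⁿ`: `∑ᵢⱼ ⟨kᵢ, a i j kⱼ⟩ ≥ 0` for all `k₁, …, kₙ ∈ H`. -/
def PosOpMatrix {H : Type*} [NormedAddCommGroup H] [InnerProductSpace ℂ H] {n : ℕ}
    (a : Fin n → Fin n → (H →L[ℂ] H)) : Prop :=
  ∀ k : Fin n → H, 0 ≤ ∑ i, ∑ j, (inner ℂ (k i) (a i j (k j)) : ℂ)

/-- Complete positivity of a map relative to a von Neumann algebra `M`: positive operator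
matrices with entries in `M` are sent to positive operator matrices. -/
def IsCPOn {H : Type*} [NormedAddCommGroup H] [InnerProductSpace ℂ H] [CompleteSpace H]
    (M : VonNeumannAlgebra H) (P : (H →L[ℂ] H) → (H →L[ℂ] H)) : Prop :=
  ∀ (n : ℕ) (a : Fin n → Fin n → (H →L[ℂ] H)),
    (∀ i j, a i j ∈ M) → PosOpMatrix a → PosOpMatrix fun i j => P (a i j)

/-- Weak-operator continuity of a map on bounded subsets of `s`; for bounded linear maps on
von Neumann algebras this captures normality (σ-weak continuity). -/
def WOTContinuousOnBalls {H K : Type*} [NormedAddCommGroup H] [InnerProductSpace ℂ H]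
    [NormedAddCommGroup K] [InnerProductSpace ℂ K]
    (s : Set (H →L[ℂ] H)) (f : (H →L[ℂ] H) → (K →L[ℂ] K)) : Prop :=
  ∀ r : ℝ, ContinuousOn
    (fun T : H →WOT[ℂ] H =>
      (ContinuousLinearMapWOT.linearEquiv ℂ : (K →WOT[ℂ] K) ≃ₗ[ℂ] (K →L[ℂ] K)).symm (f ((ContinuousLinearMapWOT.linearEquiv ℂ : (H →WOT[ℂ] H) ≃ₗ[ℂ] (H →L[ℂ] H)) T)))
    ((ContinuousLinearMapWOT.linearEquiv ℂ : (H →WOT[ℂ] H) ≃ₗ[ℂ] (H →L[ℂ] H)).symm '' (s ∩ Metric.closedBall 0 r))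

/-- The closure of a set of operators in the weak operator topology. -/
def WOTClosure {H K : Type*} [NormedAddCommGroup H] [InnerProductSpace ℂ H]
    [NormedAddCommGroup K] [InnerProductSpace ℂ K] (s : Set (H →L[ℂ] K)) : Set (H →L[ℂ] K) :=
  (ContinuousLinearMapWOT.linearEquiv ℂ : (H →WOT[ℂ] K) ≃ₗ[ℂ] (H →L[ℂ] K)).symm ⁻¹' closure ((ContinuousLinearMapWOT.linearEquiv ℂ : (H →WOT[ℂ] K) ≃ₗ[ℂ] (H →L[ℂ] K)).symm '' s)

/-- A unital normal `*`-representation of (the elements of) a von Neumann algebra `M` on a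
Hilbert space `K`, encoded as a function on all of `B(H)` whose properties are imposed only on
members of `M`. -/
structure IsNormalRepOn {H K : Type*} [NormedAddCommGroup H] [InnerProductSpace ℂ H]
    [CompleteSpace H] [NormedAddCommGroup K] [InnerProductSpace ℂ K] [CompleteSpace K]
    (M : VonNeumannAlgebra H) (π : (H →L[ℂ] H) → (K →L[ℂ] K)) : Prop where
  map_add : ∀ S ∈ M, ∀ T ∈ M, π (S + T) = π S + π T
  map_smul : ∀ (c : ℂ), ∀ T ∈ M, π (c • T) = c • π T
  map_mul : ∀ S ∈ M, ∀ T ∈ M, π (S * T) = π S * π T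
  map_star : ∀ T ∈ M, π (star T) = star (π T)
  map_one : π 1 = 1
  normal : WOTContinuousOnBalls (M : Set (H →L[ℂ] H)) π

/-- A completely positive linear map of a von Neumann algebra `M` into itself. -/
structure IsCPMapOn {H : Type*} [NormedAddCommGroup H] [InnerProductSpace ℂ H] [CompleteSpace H]
    (M : VonNeumannAlgebra H) (P : (H →L[ℂ] H) → (H →L[ℂ] H)) : Prop where
  map_mem : ∀ T ∈ M, P T ∈ M
  map_add : ∀ S ∈ M, ∀ T ∈ M, P (S + T) = P S + P T
  map_smul : ∀ (c : ℂ), ∀ T ∈ M, P (c • T) = c • P T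
  cp : IsCPOn M P

/-- A normal, unital, completely positive map on a von Neumann algebra `M`. -/
structure IsUNCPMapOn {H : Type*} [NormedAddCommGroup H] [InnerProductSpace ℂ H] [CompleteSpace H]
    (M : VonNeumannAlgebra H) (P : (H →L[ℂ] H) → (H →L[ℂ] H))
    extends IsCPMapOn M P : Prop where
  map_one : P 1 = 1
  normal : WOTContinuousOnBalls (M : Set (H →L[ℂ] H)) P

/-- A Stinespring triple `(π, K, W)` for `P`: `π` is a unital normal `*`-representation of `M`
on `K`, `W : H → K` is an isometry, and `P T = W* (π T) W` for `T ∈ M`. -/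
structure IsStinespring {H K : Type*} [NormedAddCommGroup H] [InnerProductSpace ℂ H]
    [CompleteSpace H] [NormedAddCommGroup K] [InnerProductSpace ℂ K] [CompleteSpace K]
    (M : VonNeumannAlgebra H) (P : (H →L[ℂ] H) → (H →L[ℂ] H))
    (π : (H →L[ℂ] H) → (K →L[ℂ] K)) (W : H →L[ℂ] K) : Prop where
  rep : IsNormalRepOn M π
  isometry : ∀ h : H, ‖W h‖ = ‖h‖
  dilation : ∀ T ∈ M, P T = ContinuousLinearMap.adjoint W ∘L (π T ∘L W)

/-- A minimal Stinespring triple: additionally `{π(T) W h}` has dense span in `K`. -/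
structure IsMinimalStinespring {H K : Type*} [NormedAddCommGroup H] [InnerProductSpace ℂ H]
    [CompleteSpace H] [NormedAddCommGroup K] [InnerProductSpace ℂ K] [CompleteSpace K]
    (M : VonNeumannAlgebra H) (P : (H →L[ℂ] H) → (H →L[ℂ] H))
    (π : (H →L[ℂ] H) → (K →L[ℂ] K)) (W : H →L[ℂ] K)
    extends IsStinespring M P π W : Prop where
  minimal :
    (Submodule.span ℂ {k : K | ∃ T ∈ M, ∃ h : H, k = π T (W h)}).topologicalClosure = ⊤

/-- The `P`-boundedness condition with constant `C` for an operator `Y ∈ B(H)`: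
`‖∑ᵢ Sᵢ Y* hᵢ‖² ≤ C ∑ᵢⱼ ⟨hᵢ, P(Sᵢ* Sⱼ) hⱼ⟩` for all `Sᵢ ∈ M` and `hᵢ ∈ H`. -/
def PBound {H : Type*} [NormedAddCommGroup H] [InnerProductSpace ℂ H] [CompleteSpace H]
    (M : VonNeumannAlgebra H) (P : (H →L[ℂ] H) → (H →L[ℂ] H))
    (Y : H →L[ℂ] H) (C : ℝ) : Prop :=
  ∀ (n : ℕ) (S : Fin n → (H →L[ℂ] H)), (∀ i, S i ∈ M) → ∀ h : Fin n → H,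
    ((‖∑ i, S i (ContinuousLinearMap.adjoint Y (h i))‖ ^ 2 : ℝ) : ℂ) ≤
      (C : ℂ) * ∑ i, ∑ j, (inner ℂ (h i) (P (star (S i) * S j) (h j)) : ℂ)

/-- The Arveson correspondence of `P`: all `Y ∈ B(H)` satisfying the `P`-boundedness
condition with some nonnegative constant. -/
def ArvesonCorrespondence {H : Type*} [NormedAddCommGroup H] [InnerProductSpace ℂ H]
    [CompleteSpace H] (M : VonNeumannAlgebra H) (P : (H →L[ℂ] H) → (H →L[ℂ] H)) :
    Set (H →L[ℂ] H) :=
  {Y | ∃ C : ℝ, 0 ≤ C ∧ PBound M P Y C}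

/-- A cp-semigroup on `M`: a semigroup `{P_t}_{t ≥ 0}` of unital, normal, completely positive
maps on `M` with `P_0 = id`. -/
structure IsCpSemigroup {H : Type*} [NormedAddCommGroup H] [InnerProductSpace ℂ H]
    [CompleteSpace H] (M : VonNeumannAlgebra H)
    (P : ℝ → (H →L[ℂ] H) → (H →L[ℂ] H)) : Prop where
  uncp : ∀ t : ℝ, 0 ≤ t → IsUNCPMapOn M (P t)
  id_zero : ∀ T ∈ M, P 0 T = T
  comp : ∀ s t : ℝ, 0 ≤ s → 0 ≤ t → ∀ T ∈ M, P (t + s) T = P t (P s T)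

/-- Weak continuity of a cp-semigroup: `t ↦ ⟨P_t(a) h, k⟩` is continuous on `[0, ∞)`. -/
def IsWeaklyContinuousSemigroup {H : Type*} [NormedAddCommGroup H] [InnerProductSpace ℂ H]
    [CompleteSpace H] (M : VonNeumannAlgebra H)
    (P : ℝ → (H →L[ℂ] H) → (H →L[ℂ] H)) : Prop :=
  ∀ T ∈ M, ∀ h k : H,
    ContinuousOn (fun t : ℝ => (inner ℂ ((P t T) h) k : ℂ)) (Set.Ici (0 : ℝ))

/-- A semigroup `{α_t}_{t ≥ 0}` of unital, normal `*`-endomorphisms of a von Neumann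
algebra `R`, with `α_0 = id`. -/
structure IsEndoSemigroup {K : Type*} [NormedAddCommGroup K] [InnerProductSpace ℂ K]
    [CompleteSpace K] (R : VonNeumannAlgebra K)
    (α : ℝ → (K →L[ℂ] K) → (K →L[ℂ] K)) : Prop where
  rep : ∀ t : ℝ, 0 ≤ t → IsNormalRepOn R (α t)
  map_mem : ∀ t : ℝ, 0 ≤ t → ∀ S ∈ R, α t S ∈ R
  id_zero : ∀ S ∈ R, α 0 S = S
  comp : ∀ s t : ℝ, 0 ≤ s → 0 ≤ t → ∀ S ∈ R, α (t + s) S = α t (α s S)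

/-! The Stinespring identity `∑ᵢⱼ ⟨hᵢ, P(Sᵢ*Sⱼ)hⱼ⟩ = ‖∑ᵢ π(Sᵢ)Whᵢ‖²` turns the `P`-boundedness
condition with constant `C` into the estimate `‖∑ᵢ SᵢY*hᵢ‖ ≤ √C ‖∑ᵢ π(Sᵢ)Whᵢ‖`. An intertwiner `X`
satisfies `X*π(S)W = S(W*X)*`, which gives (i) with `C = ‖X‖²` and, the vectors `π(S)Wh` spanning a
dense subspace of `K`, shows that `X` is determined by `W*X`. Conversely, for `Y ∈ E_P` the estimate
makes `π(S)Wh ↦ SY*h` a well-defined bounded map on that span; its extension `T : K → H` satisfies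
`Tπ(S) = ST`, so `X = T*` is an intertwiner with `W*X = (TW)* = Y`. -/

open scoped InnerProductSpace

theorem Finset.sum_equivFin_symm {ι E : Type*} [AddCommMonoid E] (s : Finset ι) (g : ι → E) :
    ∑ k, g (s.equivFin.symm k) = ∑ i ∈ s, g i :=
  (s.equivFin.symm.sum_comp fun i : s => g i).trans (s.sum_coe_sort g)

def stinespringSpan {H K : Type*} [NormedAddCommGroup H] [InnerProductSpace ℂ H]
    [CompleteSpace H] [NormedAddCommGroup K] [NormedSpace ℂ K] (M : VonNeumannAlgebra H)
    (π : (H →L[ℂ] H) → (K →L[ℂ] K)) (W : H →L[ℂ] K) : Submodule ℂ K :=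
  Submodule.span ℂ {k : K | ∃ T ∈ M, ∃ h : H, k = π T (W h)}

theorem eq_of_eq_on_stinespring_span {H K E : Type*} [NormedAddCommGroup H]
    [InnerProductSpace ℂ H] [CompleteSpace H] [NormedAddCommGroup K] [NormedSpace ℂ K]
    [NormedAddCommGroup E] [NormedSpace ℂ E] {M : VonNeumannAlgebra H}
    {π : (H →L[ℂ] H) → (K →L[ℂ] K)} {W : H →L[ℂ] K}
    (hW : (stinespringSpan M π W).topologicalClosure = ⊤)
    {A B : K →L[ℂ] E} (hAB : ∀ T ∈ M, ∀ h : H, A (π T (W h)) = B (π T (W h))) : A = B :=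
  ext_on (Submodule.dense_iff_topologicalClosure_eq_top.2 hW) <| by
    rintro _ ⟨T, hT, h, rfl⟩
    exact hAB T hT h

section Intertwiners

variable {H K : Type*} [NormedAddCommGroup H] [InnerProductSpace ℂ H] [CompleteSpace H]
  [NormedAddCommGroup K] [InnerProductSpace ℂ K] [CompleteSpace K]
  {M : VonNeumannAlgebra H} {π : (H →L[ℂ] H) → (K →L[ℂ] K)}

theorem intertwines_iff_adjoint (hπ : ∀ T ∈ M, π (star T) = star (π T)) (X : H →L[ℂ] K) :
    (∀ S ∈ M, X ∘L S = π S ∘L X) ↔ ∀ S ∈ M, adjoint X ∘L π S = S ∘L adjoint X := by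
  have key : ∀ S ∈ M, (X ∘L star S = π (star S) ∘L X ↔ adjoint X ∘L π S = S ∘L adjoint X) := by
    intro S hS
    rw [hπ S hS, ← (adjoint (𝕜 := ℂ) (E := H) (F := K)).injective.eq_iff, adjoint_comp,
      adjoint_comp, ← star_eq_adjoint, ← star_eq_adjoint, star_star, star_star, eq_comm]
  constructor
  · exact fun hX S hS => (key S hS).1 (hX _ (star_mem hS))
  · intro hX S hS
    simpa using (key (star S) (star_mem hS)).2 (hX _ (star_mem hS))

theorem adjoint_apply_map_apply_of_intertwines (hπ : ∀ T ∈ M, π (star T) = star (π T))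
    {W X : H →L[ℂ] K} (hX : ∀ S ∈ M, X ∘L S = π S ∘L X) {S : H →L[ℂ] H} (hS : S ∈ M) (h : H) :
    adjoint X (π S (W h)) = S (adjoint (adjoint W ∘L X) h) := by
  rw [adjoint_comp, adjoint_adjoint, comp_apply, ← comp_apply (adjoint X) (π S),
    (intertwines_iff_adjoint hπ X).1 hX S hS, comp_apply]

theorem intertwiner_ext (hπ : ∀ T ∈ M, π (star T) = star (π T)) {W : H →L[ℂ] K}
    (hW : (stinespringSpan M π W).topologicalClosure = ⊤)
    {X₁ X₂ : H →L[ℂ] K} (hX₁ : ∀ S ∈ M, X₁ ∘L S = π S ∘L X₁)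
    (hX₂ : ∀ S ∈ M, X₂ ∘L S = π S ∘L X₂) (hWX : adjoint W ∘L X₁ = adjoint W ∘L X₂) : X₁ = X₂ := by
  rw [← adjoint_adjoint X₁, ← adjoint_adjoint X₂]
  congr 1
  refine eq_of_eq_on_stinespring_span hW fun T hT h => ?_
  rw [adjoint_apply_map_apply_of_intertwines hπ hX₁ hT,
    adjoint_apply_map_apply_of_intertwines hπ hX₂ hT, hWX]

variable {P : (H →L[ℂ] H) → (H →L[ℂ] H)} {W : H →L[ℂ] K}

theorem IsStinespring.sum_inner_apply_eq (hSt : IsStinespring M P π W) {ι : Type*}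
    (s : Finset ι) (S : ι → (H →L[ℂ] H)) (hS : ∀ i ∈ s, S i ∈ M) (h : ι → H) :
    ∑ i ∈ s, ∑ j ∈ s, ⟪h i, P (star (S i) * S j) (h j)⟫_ℂ =
      ((‖∑ i ∈ s, π (S i) (W (h i))‖ ^ 2 : ℝ) : ℂ) := by
  have entry : ∀ i ∈ s, ∀ j ∈ s,
      ⟪h i, P (star (S i) * S j) (h j)⟫_ℂ = ⟪π (S i) (W (h i)), π (S j) (W (h j))⟫_ℂ := by
    intro i hi j hj
    rw [hSt.dilation _ (mul_mem (star_mem (hS i hi)) (hS j hj)), comp_apply, comp_apply,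
      adjoint_inner_right, hSt.rep.map_mul _ (star_mem (hS i hi)) _ (hS j hj),
      hSt.rep.map_star _ (hS i hi), mul_apply_eq_comp, star_eq_adjoint, adjoint_inner_right]
  calc _ = ∑ i ∈ s, ∑ j ∈ s, ⟪π (S i) (W (h i)), π (S j) (W (h j))⟫_ℂ :=
        Finset.sum_congr rfl fun i hi => Finset.sum_congr rfl (entry i hi)
    _ = ⟪∑ i ∈ s, π (S i) (W (h i)), ∑ j ∈ s, π (S j) (W (h j))⟫_ℂ := by
        rw [sum_inner]
        exact Finset.sum_congr rfl fun i _ => (inner_sum _ _ _).symm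
    _ = _ := by rw [inner_self_eq_norm_sq_to_K]; norm_cast

theorem pBound_adjoint_comp_of_intertwines (hSt : IsStinespring M P π W) {X : H →L[ℂ] K}
    (hX : ∀ S ∈ M, X ∘L S = π S ∘L X) : PBound M P (adjoint W ∘L X) (‖X‖ ^ 2) := by
  intro n S hS h
  set v := ∑ i, π (S i) (W (h i))
  have hsum : ∑ i, S i (adjoint (adjoint W ∘L X) (h i)) = adjoint X v := by
    rw [map_sum]
    exact Finset.sum_congr rfl fun i _ =>
      (adjoint_apply_map_apply_of_intertwines hSt.rep.map_star hX (hS i) (h i)).symm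
  rw [hsum, hSt.sum_inner_apply_eq Finset.univ S (fun i _ => hS i) h, ← Complex.ofReal_mul,
    Complex.real_le_real, ← mul_pow]
  gcongr
  simpa only [adjoint.norm_map] using (adjoint X).le_opNorm v

theorem PBound.norm_sq_le (hSt : IsStinespring M P π W) {Y : H →L[ℂ] H} {C : ℝ}
    (hY : PBound M P Y C) {ι : Type*} (s : Finset ι) (S : ι → (H →L[ℂ] H))
    (hS : ∀ i ∈ s, S i ∈ M) (h : ι → H) :
    ‖∑ i ∈ s, S i (adjoint Y (h i))‖ ^ 2 ≤ C * ‖∑ i ∈ s, π (S i) (W (h i))‖ ^ 2 := by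
  have hS' : ∀ k, S (s.equivFin.symm k) ∈ M := fun k => hS _ (s.equivFin.symm k).2
  have := hY _ _ hS' fun k => h (s.equivFin.symm k)
  rwa [hSt.sum_inner_apply_eq Finset.univ _ fun k _ => hS' k, ← Complex.ofReal_mul,
    Complex.real_le_real, s.sum_equivFin_symm fun i => S i (adjoint Y (h i)),
    s.sum_equivFin_symm fun i => π (S i) (W (h i))] at this

theorem PBound.exists_apply_map_apply_eq (hSt : IsStinespring M P π W)
    (hW : (stinespringSpan M π W).topologicalClosure = ⊤)
    {Y : H →L[ℂ] H} {C : ℝ} (hY : PBound M P Y C) :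
    ∃ T : K →L[ℂ] H, ∀ S ∈ M, ∀ h : H, T (π S (W h)) = S (adjoint Y h) := by
  let Φ : (M →₀ H) →ₗ[ℂ] K := Finsupp.lsum ℂ fun S : M => (π S ∘L W).toLinearMap
  let Ψ : (M →₀ H) →ₗ[ℂ] H :=
    Finsupp.lsum ℂ fun S : M => ((S : H →L[ℂ] H) ∘L adjoint Y).toLinearMap
  have hΦ : DenseRange Φ := by
    rw [DenseRange, ← LinearMap.coe_range]
    refine (Submodule.dense_iff_topologicalClosure_eq_top.2 hW).mono (Submodule.span_le.2 ?_)
    rintro _ ⟨T, hT, h, rfl⟩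
    exact ⟨Finsupp.single ⟨T, hT⟩ h, by simp [Φ]⟩
  have hΨΦ : ∀ f, ‖Ψ f‖ ≤ √C * ‖Φ f‖ := by
    intro f
    have := hY.norm_sq_le hSt f.support (fun S : M => (S : H →L[ℂ] H)) (fun S _ => S.2) f
    rw [← Real.sqrt_sq (norm_nonneg (Ψ f)), ← Real.sqrt_sq (norm_nonneg (Φ f)),
      ← Real.sqrt_mul' _ (sq_nonneg _)]
    exact Real.sqrt_le_sqrt (by simpa [Φ, Ψ, Finsupp.lsum_apply, Finsupp.sum] using this)
  refine ⟨Ψ.extendOfNorm Φ, fun S hS h => ?_⟩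
  simpa [Φ, Ψ] using LinearMap.extendOfNorm_eq hΦ ⟨_, hΨΦ⟩ (Finsupp.single ⟨S, hS⟩ h)

theorem PBound.exists_intertwiner (hSt : IsStinespring M P π W)
    (hW : (stinespringSpan M π W).topologicalClosure = ⊤)
    {Y : H →L[ℂ] H} {C : ℝ} (hY : PBound M P Y C) :
    ∃ X : H →L[ℂ] K, (∀ S ∈ M, X ∘L S = π S ∘L X) ∧ adjoint W ∘L X = Y := by
  obtain ⟨T, hT⟩ := hY.exists_apply_map_apply_eq hSt hW
  have hTπ : ∀ S ∈ M, T ∘L π S = S ∘L T := fun S hS =>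
    eq_of_eq_on_stinespring_span hW fun R hR h => by
      rw [comp_apply, comp_apply, ← mul_apply_eq_comp, ← hSt.rep.map_mul S hS R hR,
        hT _ (mul_mem hS hR), hT R hR, mul_apply_eq_comp]
  have hTW : T ∘L W = adjoint Y := ext fun h => by
    simpa [hSt.rep.map_one] using hT 1 (one_mem M) h
  refine ⟨adjoint T, (intertwines_iff_adjoint hSt.rep.map_star _).2 ?_, ?_⟩
  · simpa only [adjoint_adjoint] using hTπ
  · rw [← adjoint_comp, hTW, adjoint_adjoint]

end Intertwiners

theorem intertwiner_equiv_arveson_general {H K : Type*}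
    [NormedAddCommGroup H] [InnerProductSpace ℂ H] [CompleteSpace H]
    [NormedAddCommGroup K] [InnerProductSpace ℂ K] [CompleteSpace K]
    (M : VonNeumannAlgebra H) (P : (H →L[ℂ] H) → (H →L[ℂ] H))
    (π : (H →L[ℂ] H) → (K →L[ℂ] K)) (W : H →L[ℂ] K)
    (hmin : IsMinimalStinespring M P π W) :
    (∀ X : H →L[ℂ] K, (∀ S ∈ M, X ∘L S = π S ∘L X) →
      PBound M P (ContinuousLinearMap.adjoint W ∘L X) (‖X‖ ^ 2)) ∧
    (∀ Y ∈ ArvesonCorrespondence M P,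
      ∃ X : H →L[ℂ] K, (∀ S ∈ M, X ∘L S = π S ∘L X) ∧
        ContinuousLinearMap.adjoint W ∘L X = Y ∧
        (∀ S ∈ M, ∀ h : H,
          ContinuousLinearMap.adjoint X (π S (W h)) = S (ContinuousLinearMap.adjoint Y h)) ∧
        (∀ X' : H →L[ℂ] K, (∀ S ∈ M, X' ∘L S = π S ∘L X') →
          ContinuousLinearMap.adjoint W ∘L X' = Y → X' = X)) := by
  have hSt := hmin.toIsStinespring
  refine ⟨fun X hX => pBound_adjoint_comp_of_intertwines hSt hX, ?_⟩
  rintro Y ⟨C, -, hY⟩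
  obtain ⟨X, hX, rfl⟩ := hY.exists_intertwiner hSt hmin.minimal
  exact ⟨X, hX, rfl, fun S hS h => adjoint_apply_map_apply_of_intertwines hSt.rep.map_star hX hS h,
    fun X' hX' hWX' => intertwiner_ext hSt.rep.map_star hmin.minimal hX' hX hWX'⟩

/-- `X ↦ W* X` is a bijection between the intertwining space of a minimal
Stinespring triple for `P` and the Arveson correspondence `E_P`. -/
theorem intertwiner_equiv_arveson {H K : Type*}
    [NormedAddCommGroup H] [InnerProductSpace ℂ H] [CompleteSpace H]
    [NormedAddCommGroup K] [InnerProductSpace ℂ K] [CompleteSpace K]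
    (M : VonNeumannAlgebra H) (P : (H →L[ℂ] H) → (H →L[ℂ] H)) (hP : IsUNCPMapOn M P)
    (π : (H →L[ℂ] H) → (K →L[ℂ] K)) (W : H →L[ℂ] K)
    (hmin : IsMinimalStinespring M P π W) :
    (∀ X : H →L[ℂ] K, (∀ S ∈ M, X ∘L S = π S ∘L X) →
      PBound M P (ContinuousLinearMap.adjoint W ∘L X) (‖X‖ ^ 2)) ∧
    (∀ Y ∈ ArvesonCorrespondence M P,
      ∃ X : H →L[ℂ] K, (∀ S ∈ M, X ∘L S = π S ∘L X) ∧
        ContinuousLinearMap.adjoint W ∘L X = Y ∧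
        (∀ S ∈ M, ∀ h : H,
          ContinuousLinearMap.adjoint X (π S (W h)) = S (ContinuousLinearMap.adjoint Y h)) ∧
        (∀ X' : H →L[ℂ] K, (∀ S ∈ M, X' ∘L S = π S ∘L X') →
          ContinuousLinearMap.adjoint W ∘L X' = Y → X' = X)) :=
  intertwiner_equiv_arveson_general M P π W hmin
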